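/- arXiv:1812.06329 — 3 statements merged into one kernel-verified Lean document; each statement's English description precedes it below -/
import Mathlib

section
/- Under layer based partition, the total communication volume of any rectangular partition into p ≥ 2 rectangles strictly exceeds that of any layer based partition: C_REC > C_LBP = 2N². -/
/-! Both volumes carry the factor `N`, so it suffices to compare `∑ (hᵢ + wᵢ)` with `2N`.
By AM-GM, `4N² = ∑ 4 hᵢ wᵢ ≤ ∑ (hᵢ + wᵢ)²`, and with at least two positive summands
`∑ (hᵢ + wᵢ)² < (∑ (hᵢ + wᵢ))²`, so `2N < ∑ (hᵢ + wᵢ)`. -/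

open Finset

section

variable {ι R : Type*} [Fintype ι] [CommRing R] [LinearOrder R] [IsStrictOrderedRing R]

theorem sum_sq_lt_sq_sum [Nontrivial ι] {f : ι → R} (hf : ∀ i, 0 < f i) :
    ∑ i, f i ^ 2 < (∑ i, f i) ^ 2 := by
  obtain ⟨i, j, hij⟩ := exists_pair_ne ι
  have hle : ∀ k, f k ≤ ∑ l, f l := fun k =>
    single_le_sum (fun l _ => (hf l).le) (mem_univ k)
  have hlt : f i < ∑ l, f l :=
    single_lt_sum hij.symm (mem_univ i) (mem_univ j) (hf j) fun l _ _ => (hf l).le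
  rw [sq (∑ l, f l), sum_mul]
  refine sum_lt_sum (fun k _ => ?_) ⟨i, mem_univ i, ?_⟩
  · rw [sq]; exact mul_le_mul_of_nonneg_left (hle k) (hf k).le
  · rw [sq]; exact mul_lt_mul_of_pos_left hlt (hf i)

theorem two_mul_lt_sum_add_of_sum_mul_eq_sq [Nontrivial ι] {h w : ι → R}
    (hpos : ∀ i, 0 < h i + w i) {A : R} (harea : ∑ i, h i * w i = A ^ 2) :
    2 * A < ∑ i, (h i + w i) := by
  refine lt_of_pow_lt_pow_left₀ 2 (sum_nonneg fun i _ => (hpos i).le) ?_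
  calc (2 * A) ^ 2 = ∑ i, 4 * h i * w i := by
        rw [mul_pow, ← harea, mul_sum]; norm_num [mul_assoc]
    _ ≤ ∑ i, (h i + w i) ^ 2 := sum_le_sum fun i _ => four_mul_le_sq_add (h i) (w i)
    _ < (∑ i, (h i + w i)) ^ 2 := sum_sq_lt_sq_sum hpos

end

theorem sum_two_mul_mul_eq_of_sum_eq {ι : Type*} [Fintype ι] (N : ℕ) {k : ι → ℕ}
    (hk : ∑ i, k i = N) : ∑ i, 2 * (N : ℝ) * (k i : ℝ) = 2 * (N : ℝ) ^ 2 := by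
  rw [← mul_sum, ← Nat.cast_sum, hk, sq, mul_assoc]

theorem rect_gt_lbp (N : ℕ) (p : ℕ) (hN : 0 < N) (hp : 2 ≤ p)
    (k : Fin p → ℕ) (hk : ∑ i, k i = N)
    (h w : Fin p → ℝ) (hh : ∀ i, 0 < h i) (hw : ∀ i, 0 < w i)
    (harea : ∑ i, h i * w i = (N : ℝ) ^ 2) :
    (∑ i, (h i + w i) * (N : ℝ)) > ∑ i, 2 * (N : ℝ) * (k i : ℝ) ∧
      (∑ i, 2 * (N : ℝ) * (k i : ℝ)) = 2 * (N : ℝ) ^ 2 := by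
  have : Nontrivial (Fin p) := Fin.nontrivial_iff_two_le.mpr hp
  have hlbp := sum_two_mul_mul_eq_of_sum_eq N hk
  have hperimeter : 2 * (N : ℝ) < ∑ i, (h i + w i) :=
    two_mul_lt_sum_add_of_sum_mul_eq_sq (fun i => add_pos (hh i) (hw i)) harea
  refine ⟨?_, hlbp⟩
  rw [hlbp, ← sum_mul, sq, ← mul_assoc]
  exact mul_lt_mul_of_pos_right hperimeter (Nat.cast_pos.mpr hN)
end

section
/- In the PCCS mode with p processors, the system k_i·(N²·w_i·T_cp + 2·N·z_i·T_cm) = k_{i-1}·(N²·w_{i-1}·T_cp + 2·N·z_{i-1}·T_cm) for i = 2,...,p together with ∑ k_i = N has the unique solution k_1 = N / (1 + ∑_{i=2}^p ∏_{j=2}^i (N·w_{j-1}·T_cp + 2·z_{j-1}·T_cm)/(N·w_j·T_cp + 2·z_j·T_cm)) and k_i = (∏_{j=2}^i (N·w_{j-1}·T_cp + 2·z_{j-1}·T_cm)/(N·w_j·T_cp + 2·z_j·T_cm))·k_1. -/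
/-!
Since `N ^ 2 w_i T_cp + 2 N z_i T_cm = N d_i` with `d_i = N w_i T_cp + 2 z_i T_cm > 0`, the
equal-time conditions say `k_i = (d_{i-1} / d_i) k_{i-1}`, so by induction every `k_i` is the
product of these ratios times `k_1`. Substituting into `∑ k_i = N` gives `k_1 (1 + S) = N` with
`S ≥ 0` the sum of those products, which pins down `k_1`.
-/

open Finset

theorem eq_prod_Icc_mul_of_eq_mul_sub_one {M : Type*} [CommMonoid M] {k r : ℕ → M} {m n : ℕ}
    (hrec : ∀ i ∈ Icc (m + 1) n, k i = r i * k (i - 1)) :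
    ∀ i ∈ Icc m n, k i = (∏ j ∈ Icc (m + 1) i, r j) * k m := by
  intro i hi
  obtain ⟨hmi, hin⟩ := mem_Icc.mp hi
  clear hi
  induction i, hmi using Nat.le_induction with
  | base => simp
  | succ i hmi ih =>
    rw [hrec (i + 1) (mem_Icc.mpr ⟨by omega, hin⟩), Nat.add_sub_cancel, ih (by omega),
      prod_Icc_succ_top (by omega), mul_right_comm, mul_comm (r _)]

theorem sum_Icc_eq_mul_of_eq_mul {R : Type*} [Semiring R] {k c : ℕ → R} {m n : ℕ}
    (hmn : m ≤ n) (hk : ∀ i ∈ Icc (m + 1) n, k i = c i * k m) :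
    ∑ i ∈ Icc m n, k i = (1 + ∑ i ∈ Icc (m + 1) n, c i) * k m := by
  rw [← add_sum_Ioc_eq_sum_Icc hmn, ← Icc_add_one_left_eq_Ioc, sum_congr rfl hk, add_mul,
    one_mul, sum_mul]

theorem pccs_solution (N Tcp Tcm : ℝ) (hN : 0 < N) (hTcp : 0 < Tcp) (hTcm : 0 < Tcm)
    (p : ℕ) (hp : 1 ≤ p) (w z : ℕ → ℝ) (hw : ∀ i, 0 < w i) (hz : ∀ i, 0 < z i)
    (k : ℕ → ℝ)
    (heq : ∀ i ∈ Finset.Icc 2 p,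
      k i * (N ^ 2 * w i * Tcp + 2 * N * z i * Tcm)
        = k (i - 1) * (N ^ 2 * w (i - 1) * Tcp + 2 * N * z (i - 1) * Tcm))
    (hsum : ∑ i ∈ Finset.Icc 1 p, k i = N) :
    k 1 = N / (1 + ∑ i ∈ Finset.Icc 2 p, ∏ j ∈ Finset.Icc 2 i,
        (N * w (j - 1) * Tcp + 2 * z (j - 1) * Tcm) / (N * w j * Tcp + 2 * z j * Tcm)) ∧
    ∀ i ∈ Finset.Icc 2 p, k i = (∏ j ∈ Finset.Icc 2 i,
        (N * w (j - 1) * Tcp + 2 * z (j - 1) * Tcm) / (N * w j * Tcp + 2 * z j * Tcm)) * k 1 := by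
  set d : ℕ → ℝ := fun j => N * w j * Tcp + 2 * z j * Tcm
  have hd : ∀ j, 0 < d j := fun j => by have := hw j; have := hz j; positivity
  have hrec : ∀ i ∈ Icc (1 + 1) p, k i = d (i - 1) / d i * k (i - 1) := fun i hi => by
    rw [div_mul_eq_mul_div, eq_div_iff (hd i).ne']
    apply mul_left_cancel₀ hN.ne'
    linear_combination heq i hi
  have hk : ∀ i ∈ Icc 2 p, k i = (∏ j ∈ Icc 2 i, d (j - 1) / d j) * k 1 := fun i hi =>
    eq_prod_Icc_mul_of_eq_mul_sub_one hrec i (Icc_subset_Icc_left (by norm_num) hi)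
  refine ⟨?_, hk⟩
  have hS : 0 ≤ ∑ i ∈ Icc 2 p, ∏ j ∈ Icc 2 i, d (j - 1) / d j :=
    sum_nonneg fun i _ => prod_nonneg fun j _ => (div_pos (hd _) (hd j)).le
  rw [sum_Icc_eq_mul_of_eq_mul hp hk] at hsum
  exact eq_div_of_mul_eq (by positivity) ((mul_comm _ _).trans hsum)
end

section
/- In the SCSS mode, assuming N·w_i·T_cp > 2·z_i·T_cm for all i, the system k_{i-1}·N²·w_{i-1}·T_cp = k_i·N²·w_i·T_cp + 2·k_{i-1}·N·z_{i-1}·T_cm for i = 2,...,p with ∑ k_i = N has the unique solution k_i = (∏_{j=2}^i (N·w_{j-1}·T_cp − 2·z_{j-1}·T_cm)/(N·w_j·T_cp))·k_1 with k_1 = N/(1 + ∑_{i=2}^p ∏_{j=2}^i (N·w_{j-1}·T_cp − 2·z_{j-1}·T_cm)/(N·w_j·T_cp)), and all k_i are strictly positive. -/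
/-! Each balance equation says `k i = r i * k (i - 1)` with the positive ratio
`r j = (N w_{j-1} T_cp - 2 z_{j-1} T_cm) / (N w_j T_cp)`, so `k i = (∏ j ∈ [2, i], r j) * k 1`;
the normalization `∑ k i = N` then fixes `k 1 = N / (1 + ∑ i ∈ [2, p], ∏ j ∈ [2, i], r j) > 0`. -/

open Finset

theorem eq_prod_Icc_mul_of_eq_mul_pred {M : Type*} [CommMonoid M] {k r : ℕ → M} {p : ℕ}
    (h : ∀ i ∈ Icc 2 p, k i = r i * k (i - 1)) :
    ∀ i ∈ Icc 1 p, k i = (∏ j ∈ Icc 2 i, r j) * k 1 := by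
  intro i hi
  obtain ⟨hi1, hip⟩ := mem_Icc.mp hi
  induction i, hi1 using Nat.le_induction with
  | base => simp
  | succ n hn ih =>
    rw [h (n + 1) (mem_Icc.mpr ⟨by omega, hip⟩), Nat.add_sub_cancel,
      ih (mem_Icc.mpr ⟨hn, by omega⟩) (by omega), prod_Icc_succ_top (by omega)]
    ac_rfl

theorem sum_Icc_one_eq_mul_one_add {R : Type*} [CommSemiring R] {k c : ℕ → R} {p : ℕ}
    (hp : 1 ≤ p) (h : ∀ i ∈ Icc 2 p, k i = c i * k 1) :
    ∑ i ∈ Icc 1 p, k i = k 1 * (1 + ∑ i ∈ Icc 2 p, c i) := by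
  rw [← add_sum_Ioc_eq_sum_Icc hp, ← Icc_add_one_left_eq_Ioc, one_add_one_eq_two, sum_congr rfl h, ← sum_mul]
  ring

theorem scss_load_eq_ratio_mul {N Tcp Tcm w w' z' k k' : ℝ} (hN : N ≠ 0)
    (hd : N * w * Tcp ≠ 0)
    (h : k' * N ^ 2 * w' * Tcp = k * N ^ 2 * w * Tcp + 2 * k' * N * z' * Tcm) :
    k = (N * w' * Tcp - 2 * z' * Tcm) / (N * w * Tcp) * k' := by
  rw [div_mul_eq_mul_div, eq_div_iff hd]
  apply mul_left_cancel₀ hN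
  linear_combination -h

theorem scss_solution_general (N Tcp Tcm : ℝ) (hN : 0 < N) (hTcp : 0 < Tcp)
    (p : ℕ) (hp : 1 ≤ p) (w z : ℕ → ℝ) (hw : ∀ i, 0 < w i)
    (hpos : ∀ i, N * w i * Tcp > 2 * z i * Tcm)
    (k : ℕ → ℝ)
    (heq : ∀ i ∈ Finset.Icc 2 p,
      k (i - 1) * N ^ 2 * w (i - 1) * Tcp
        = k i * N ^ 2 * w i * Tcp + 2 * k (i - 1) * N * z (i - 1) * Tcm)
    (hsum : ∑ i ∈ Finset.Icc 1 p, k i = N) :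
    (k 1 = N / (1 + ∑ i ∈ Finset.Icc 2 p, ∏ j ∈ Finset.Icc 2 i,
        (N * w (j - 1) * Tcp - 2 * z (j - 1) * Tcm) / (N * w j * Tcp)) ∧
     ∀ i ∈ Finset.Icc 2 p, k i = (∏ j ∈ Finset.Icc 2 i,
        (N * w (j - 1) * Tcp - 2 * z (j - 1) * Tcm) / (N * w j * Tcp)) * k 1) ∧
    ∀ i ∈ Finset.Icc 1 p, 0 < k i := by
  set r : ℕ → ℝ := fun j => (N * w (j - 1) * Tcp - 2 * z (j - 1) * Tcm) / (N * w j * Tcp)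
  have hden : ∀ j, 0 < N * w j * Tcp := fun j => by have := hw j; positivity
  have hr : ∀ j, 0 < r j := fun j => div_pos (sub_pos.mpr (hpos (j - 1))) (hden j)
  have hk : ∀ i ∈ Icc 1 p, k i = (∏ j ∈ Icc 2 i, r j) * k 1 :=
    eq_prod_Icc_mul_of_eq_mul_pred fun i hi =>
      scss_load_eq_ratio_mul hN.ne' (hden i).ne' (heq i hi)
  have hk' : ∀ i ∈ Icc 2 p, k i = (∏ j ∈ Icc 2 i, r j) * k 1 := fun i hi =>
    hk i (mem_Icc.mpr ⟨by linarith [(mem_Icc.mp hi).1], (mem_Icc.mp hi).2⟩)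
  have hS : 0 < 1 + ∑ i ∈ Icc 2 p, ∏ j ∈ Icc 2 i, r j :=
    add_pos_of_pos_of_nonneg one_pos (sum_nonneg fun i _ => (prod_pos fun j _ => hr j).le)
  have hk1 : k 1 = N / (1 + ∑ i ∈ Icc 2 p, ∏ j ∈ Icc 2 i, r j) := by
    rw [eq_div_iff hS.ne', ← sum_Icc_one_eq_mul_one_add hp hk', hsum]
  have hk1_pos : 0 < k 1 := hk1 ▸ div_pos hN hS
  refine ⟨⟨hk1, hk'⟩, fun i hi => ?_⟩
  rw [hk i hi]
  exact mul_pos (prod_pos fun j _ => hr j) hk1_pos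

theorem scss_solution (N Tcp Tcm : ℝ) (hN : 0 < N) (hTcp : 0 < Tcp) (hTcm : 0 < Tcm)
    (p : ℕ) (hp : 1 ≤ p) (w z : ℕ → ℝ) (hw : ∀ i, 0 < w i) (hz : ∀ i, 0 < z i)
    (hpos : ∀ i, N * w i * Tcp > 2 * z i * Tcm)
    (k : ℕ → ℝ)
    (heq : ∀ i ∈ Finset.Icc 2 p,
      k (i - 1) * N ^ 2 * w (i - 1) * Tcp
        = k i * N ^ 2 * w i * Tcp + 2 * k (i - 1) * N * z (i - 1) * Tcm)
    (hsum : ∑ i ∈ Finset.Icc 1 p, k i = N) :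
    (k 1 = N / (1 + ∑ i ∈ Finset.Icc 2 p, ∏ j ∈ Finset.Icc 2 i,
        (N * w (j - 1) * Tcp - 2 * z (j - 1) * Tcm) / (N * w j * Tcp)) ∧
     ∀ i ∈ Finset.Icc 2 p, k i = (∏ j ∈ Finset.Icc 2 i,
        (N * w (j - 1) * Tcp - 2 * z (j - 1) * Tcm) / (N * w j * Tcp)) * k 1) ∧
    ∀ i ∈ Finset.Icc 1 p, 0 < k i :=
  scss_solution_general N Tcp Tcm hN hTcp p hp w z hw hpos k heq hsum
end
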